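/- (Dual projective cross law) Suppose U, V, W are nonzero vectors with a_U, a_V, a_W all nonzero and with all three quantities a_U·a_V − b_{UV}², a_U·a_W − b_{UW}², a_V·a_W − b_{VW}² nonzero. Then the projective quadrance q_w = q(U,V) and the projective spreads S_u, S_v, S_w satisfy (q_w·S_u·S_v − S_u − S_v − S_w + 2)² = 4(1 − S_u)(1 − S_v)(1 − S_w). -/

import Mathlib

/-! Write `D_XY` for the Gram determinant `B X X * B Y Y - (B X Y) ^ 2` and `Δ` for that of
`U, V, W`. The Desnanot–Jacobi identity
`D_UW D_VW - (B W W * B U V - B U W * B V W) ^ 2 = B W W * Δ` gives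
`S_w = B W W * Δ / (D_UW D_VW)`, and likewise for `S_u`, `S_v`, while
`q_w = D_UV / (B U U * B V V)`. After this substitution the expression inside the square on the
left equals `-2 X Y Z / (D_UV D_UW D_VW)`, where `X ^ 2, Y ^ 2, Z ^ 2` are the numerators of
`1 - S_u, 1 - S_v, 1 - S_w`; squaring it gives the right-hand side. -/

/-- The projective quadrance between the projective points `[U]` and `[V]`. -/
def projQuadrance {F : Type*} [Field F] {M : Type*} [AddCommGroup M] [Module F M]
    (B : LinearMap.BilinForm F M) (U V : M) : F :=
  1 - (B U V) ^ 2 / (B U U * B V V)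

/-- The projective spread between the projective lines `WU` and `WV`
(the spread at the vertex `[W]`). -/
def projSpread {F : Type*} [Field F] {M : Type*} [AddCommGroup M] [Module F M]
    (B : LinearMap.BilinForm F M) (W U V : M) : F :=
  1 - (B W W * B U V - B U W * B V W) ^ 2 /
      ((B U U * B W W - (B U W) ^ 2) * (B V V * B W W - (B V W) ^ 2))

namespace LinearMap.BilinForm

variable {R : Type*} [CommRing R] {M : Type*} [AddCommGroup M] [Module R M]
  {B : LinearMap.BilinForm R M}

def gramDet₂ (B : LinearMap.BilinForm R M) (U V : M) : R :=
  B U U * B V V - B U V ^ 2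

def gramDet₃ (B : LinearMap.BilinForm R M) (U V W : M) : R :=
  !![B U U, B U V, B U W; B V U, B V V, B V W; B W U, B W V, B W W].det

lemma IsSymm.gramDet₂_comm (hB : B.IsSymm) (U V : M) : gramDet₂ B U V = gramDet₂ B V U := by
  rw [gramDet₂, gramDet₂, hB.eq V U, mul_comm]

lemma IsSymm.gramDet₃_eq (hB : B.IsSymm) (U V W : M) :
    gramDet₃ B U V W = B U U * B V V * B W W + 2 * B U V * B U W * B V W
      - B U U * B V W ^ 2 - B V V * B U W ^ 2 - B W W * B U V ^ 2 := by
  simp only [gramDet₃, hB.eq V U, hB.eq W U, hB.eq W V, Matrix.det_fin_three, Fin.isValue,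
    Matrix.of_apply, Matrix.cons_val', Matrix.cons_val_zero, Matrix.cons_val_fin_one,
    Matrix.cons_val_one, Matrix.cons_val]
  ring

lemma IsSymm.gramDet₃_rotate (hB : B.IsSymm) (U V W : M) :
    gramDet₃ B V W U = gramDet₃ B U V W := by
  rw [hB.gramDet₃_eq, hB.gramDet₃_eq, hB.eq W U, hB.eq V U]
  ring

lemma IsSymm.gramDet₃_swap₂₃ (hB : B.IsSymm) (U V W : M) :
    gramDet₃ B U W V = gramDet₃ B U V W := by
  rw [hB.gramDet₃_eq, hB.gramDet₃_eq, hB.eq W V]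
  ring

lemma IsSymm.gramDet₂_mul_gramDet₂_sub_sq (hB : B.IsSymm) (U V W : M) :
    gramDet₂ B U W * gramDet₂ B V W - (B W W * B U V - B U W * B V W) ^ 2
      = B W W * gramDet₃ B U V W := by
  rw [gramDet₂, gramDet₂, hB.gramDet₃_eq]
  ring

end LinearMap.BilinForm

section Field

open LinearMap.BilinForm

variable {F : Type*} [Field F] {M : Type*} [AddCommGroup M] [Module F M]
  {B : LinearMap.BilinForm F M} {U V W : M}

lemma projQuadrance_eq_gramDet₂_div (hU : B U U ≠ 0) (hV : B V V ≠ 0) :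
    projQuadrance B U V = B.gramDet₂ U V / (B U U * B V V) :=
  one_sub_div (mul_ne_zero hU hV)

lemma one_sub_projSpread (B : LinearMap.BilinForm F M) (W U V : M) :
    1 - projSpread B W U V =
      (B W W * B U V - B U W * B V W) ^ 2 / (B.gramDet₂ U W * B.gramDet₂ V W) :=
  sub_sub_cancel _ _

lemma LinearMap.BilinForm.IsSymm.projSpread_eq_mul_gramDet₃_div (hB : B.IsSymm)
    (hUW : B.gramDet₂ U W ≠ 0) (hVW : B.gramDet₂ V W ≠ 0) :
    projSpread B W U V = B W W * B.gramDet₃ U V W / (B.gramDet₂ U W * B.gramDet₂ V W) := by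
  rw [← hB.gramDet₂_mul_gramDet₂_sub_sq]
  exact one_sub_div (mul_ne_zero hUW hVW)

lemma LinearMap.BilinForm.IsSymm.dual_cross_expr_eq (hB : B.IsSymm) (hU : B U U ≠ 0)
    (hV : B V V ≠ 0)
    (hUV : B.gramDet₂ U V ≠ 0) (hUW : B.gramDet₂ U W ≠ 0) (hVW : B.gramDet₂ V W ≠ 0) :
    projQuadrance B U V * projSpread B U V W * projSpread B V U W -
        projSpread B U V W - projSpread B V U W - projSpread B W U V + 2 =
      -2 * (B U U * B V W - B U V * B U W) * (B V V * B U W - B U V * B V W) *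
        (B W W * B U V - B U W * B V W) /
        (B.gramDet₂ U V * B.gramDet₂ U W * B.gramDet₂ V W) := by
  have hVU : B.gramDet₂ V U ≠ 0 := hB.gramDet₂_comm U V ▸ hUV
  have hWU : B.gramDet₂ W U ≠ 0 := hB.gramDet₂_comm U W ▸ hUW
  have hWV : B.gramDet₂ W V ≠ 0 := hB.gramDet₂_comm V W ▸ hVW
  rw [projQuadrance_eq_gramDet₂_div hU hV, hB.projSpread_eq_mul_gramDet₃_div hVU hWU,
    hB.projSpread_eq_mul_gramDet₃_div hUV hWV, hB.projSpread_eq_mul_gramDet₃_div hUW hVW,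
    hB.gramDet₃_rotate U V W, hB.gramDet₃_swap₂₃ U V W, hB.gramDet₂_comm V U,
    hB.gramDet₂_comm W U, hB.gramDet₂_comm W V]
  field_simp
  rw [gramDet₂, gramDet₂, gramDet₂, hB.gramDet₃_eq]
  ring

end Field

theorem dual_projective_cross_law_general
    {F : Type*} [Field F]
    {M : Type*} [AddCommGroup M] [Module F M]
    (B : LinearMap.BilinForm F M) (hsym : ∀ x y : M, B x y = B y x)
    (U V W : M)
    (haU : B U U ≠ 0) (haV : B V V ≠ 0)
    (hdUV : B U U * B V V - (B U V) ^ 2 ≠ 0)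
    (hdUW : B U U * B W W - (B U W) ^ 2 ≠ 0)
    (hdVW : B V V * B W W - (B V W) ^ 2 ≠ 0)
 :
    (projQuadrance B U V * projSpread B U V W * projSpread B V U W -
        projSpread B U V W - projSpread B V U W - projSpread B W U V + 2) ^ 2 =
      4 * (1 - projSpread B U V W) * (1 - projSpread B V U W) *
        (1 - projSpread B W U V) := by
  have hB : B.IsSymm := ⟨hsym⟩
  rw [hB.dual_cross_expr_eq haU haV hdUV hdUW hdVW, one_sub_projSpread, one_sub_projSpread,
    one_sub_projSpread, hB.gramDet₂_comm V U, hB.gramDet₂_comm W U, hB.gramDet₂_comm W V,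
    hsym V U, hsym W U, hsym W V]
  ring

theorem dual_projective_cross_law
    {F : Type*} [Field F] (hchar : (2 : F) ≠ 0)
    {M : Type*} [AddCommGroup M] [Module F M]
    (B : LinearMap.BilinForm F M) (hsym : ∀ x y : M, B x y = B y x)
    (U V W : M) (hU : U ≠ 0) (hV : V ≠ 0) (hW : W ≠ 0)
    (haU : B U U ≠ 0) (haV : B V V ≠ 0) (haW : B W W ≠ 0)
    (hdUV : B U U * B V V - (B U V) ^ 2 ≠ 0)
    (hdUW : B U U * B W W - (B U W) ^ 2 ≠ 0)
    (hdVW : B V V * B W W - (B V W) ^ 2 ≠ 0)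
 :
    (projQuadrance B U V * projSpread B U V W * projSpread B V U W -
        projSpread B U V W - projSpread B V U W - projSpread B W U V + 2) ^ 2 =
      4 * (1 - projSpread B U V W) * (1 - projSpread B V U W) *
        (1 - projSpread B W U V) :=
  dual_projective_cross_law_general B hsym U V W haU haV hdUV hdUW hdVW
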